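/- For every ε' > 0 there exists q_0 = q_0(ε') such that for every integer q ≥ q_0 the following holds. Let Y be as in the context and let α ∈ B^1(Y,F_2), i.e. α is the set of edges with exactly one endpoint in A for some set A of vertices of Y. If |α_v| ≤ Q/2 for every vertex v (local minimality) and |α| < |Y(1)|/(4(1+ε')), where Y(1) is the set of edges of Y, then α = ∅. -/

import Mathlib

/-!
Write `α = δ₀(A)`, `a = |A|`, `b = |Aᶜ|`, `n = a + b`, and let `λ = 6q` bound the
nontrivial spectrum of the `Q`-regular 1-skeleton. Local minimality says that every vertex has
at least `Q/2` neighbours on its own side of the cut. The expander mixing lemma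
`|n·e(S,S) - Q·|S|²| ≤ λ·|S|·|Sᶜ|`, applied to `S = A` and `S = Aᶜ`, then forces the cut to be
balanced, `b(Q - 2λ) ≤ aQ` and `a(Q - 2λ) ≤ bQ`, and bounds it below, `ab(Q - λ) ≤ n|α|`.
Together these give `nQ ≤ 8|α|`, i.e. `|α| ≥ |Y(1)|/4`, as soon as `4λ ≤ Q`, which holds
for `q ≥ 11`.
-/

open scoped Classical
open Matrix

structure SComplex (V : Type) [DecidableEq V] where
  faces : Finset (Finset V)
  down_closed : ∀ σ ∈ faces, ∀ τ ⊆ σ, τ ∈ faces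

namespace SComplex

variable {V : Type} [Fintype V] [DecidableEq V]

/-- The faces of cardinality `n` (i.e. of dimension `n-1`); so `K Y 2` is the edge set
and `K Y 3` the set of triangles. -/
def K (X : SComplex V) (n : ℕ) : Finset (Finset V) := X.faces.filter fun σ => σ.card = n

/-- `X` is pure with all facets (maximal faces) of cardinality `D` (dimension `D-1`). -/
def IsPure (X : SComplex V) (D : ℕ) : Prop :=
  X.faces.Nonempty ∧ ∀ σ ∈ X.faces, ∃ τ ∈ X.faces, σ ⊆ τ ∧ τ.card = D

end SComplex

variable {V : Type} [Fintype V] [DecidableEq V]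

/-- `t_i`: the number of triangles of `Y` containing exactly `i` edges of `α`. -/
def tcount (Y : SComplex V) (α : Finset (Finset V)) (i : ℕ) : ℕ :=
  ((Y.K 3).filter fun τ => (α.filter fun e => e ⊆ τ).card = i).card

/-- `α_v`: the set of edges of `α` containing the vertex `v`. -/
def alphaV (α : Finset (Finset V)) (v : V) : Finset (Finset V) :=
  α.filter fun e => v ∈ e

/-- The 1-skeleton of `Y`, as a simple graph on the vertex type. -/
def skeletonGraph (Y : SComplex V) : SimpleGraph V where
  Adj u w := u ≠ w ∧ ({u, w} : Finset V) ∈ Y.faces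
  symm := by
    constructor
    intro u w h
    exact ⟨h.1.symm, by rw [Finset.pair_comm]; exact h.2⟩
  loopless := by constructor; intro u h; exact h.1 rfl

/-- The vertices of the link of `v`: the edges of `Y` containing `v`. -/
def linkVerts (Y : SComplex V) (v : V) : Finset (Finset V) :=
  (Y.K 2).filter fun e => v ∈ e

/-- The link graph `Y_v`: vertices are the edges of `Y` containing `v`, two edges being
adjacent iff they lie in a common triangle of `Y`. -/
def linkGraph (Y : SComplex V) (v : V) : SimpleGraph ↥(linkVerts Y v) where
  Adj e f := e ≠ f ∧ (e.1 ∪ f.1) ∈ Y.K 3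
  symm := by
    constructor
    intro e f h
    exact ⟨h.1.symm, by rw [Finset.union_comm]; exact h.2⟩
  loopless := by constructor; intro e h; exact h.1 rfl

/-- The standing hypotheses on the 2-dimensional complex `Y` (with `Q = 2(q²+q+1)`):
`q ≥ 2`; `Y` is finite pure 2-dimensional; (i) every edge lies in exactly `q+1` triangles;
(ii) the 1-skeleton is a connected `Q`-regular graph whose adjacency eigenvalues other than
`Q` have absolute value at most `6q`; (iii) every link `Y_v` is a connected bipartite
`(q+1)`-regular graph on `Q` vertices whose adjacency eigenvalues other than `±(q+1)` have
absolute value at most `√q`. -/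
def Setup (q : ℕ) (Y : SComplex V) : Prop :=
  2 ≤ q ∧ Y.IsPure 3 ∧
  (∀ e ∈ Y.K 2, ((Y.K 3).filter fun τ => e ⊆ τ).card = q + 1) ∧
  (skeletonGraph Y).Connected ∧
  (∀ v : V, (skeletonGraph Y).degree v = 2 * (q ^ 2 + q + 1)) ∧
  (∀ mu : ℝ, (∃ f : V → ℝ, f ≠ 0 ∧ (skeletonGraph Y).adjMatrix ℝ *ᵥ f = mu • f) →
    mu = 2 * ((q : ℝ) ^ 2 + q + 1) ∨ |mu| ≤ 6 * (q : ℝ)) ∧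
  (∀ v : V,
    (linkGraph Y v).Connected ∧
    (∃ C : ↥(linkVerts Y v) → Bool, ∀ a b, (linkGraph Y v).Adj a b → C a ≠ C b) ∧
    (∀ a : ↥(linkVerts Y v), (linkGraph Y v).degree a = q + 1) ∧
    (linkVerts Y v).card = 2 * (q ^ 2 + q + 1) ∧
    (∀ mu : ℝ, (∃ f : ↥(linkVerts Y v) → ℝ, f ≠ 0 ∧
        (linkGraph Y v).adjMatrix ℝ *ᵥ f = mu • f) →
      mu = (q : ℝ) + 1 ∨ mu = -((q : ℝ) + 1) ∨ |mu| ≤ Real.sqrt q))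

open Finset

lemma OrthonormalBasis.dotProduct_eq_sum {ι n : Type*} [Fintype ι] [Fintype n]
    (b : OrthonormalBasis ι ℝ (EuclideanSpace ℝ n)) (x y : n → ℝ) :
    x ⬝ᵥ y = ∑ i, (⇑(b i) ⬝ᵥ x) * (⇑(b i) ⬝ᵥ y) := by
  have := b.sum_inner_mul_inner (WithLp.toLp 2 x) (WithLp.toLp 2 y)
  simp only [EuclideanSpace.inner_eq_star_dotProduct, star_trivial] at this
  rw [dotProduct_comm, ← this]
  exact sum_congr rfl fun i _ => by rw [dotProduct_comm y]

lemma Matrix.IsHermitian.abs_dotProduct_mulVec_le {n : Type*} [Fintype n] [DecidableEq n]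
    {M : Matrix n n ℝ} (hM : M.IsHermitian) {c : ℝ}
    (heig : ∀ (μ : ℝ) (f : n → ℝ), f ≠ 0 → M *ᵥ f = μ • f →
      (∀ i j, f i = f j) ∨ |μ| ≤ c)
    {g : n → ℝ} (hg : ∑ i, g i = 0) :
    |g ⬝ᵥ M *ᵥ g| ≤ c * (g ⬝ᵥ g) := by
  set b := hM.eigenvectorBasis
  set β : n → ℝ := fun i => ⇑(b i) ⬝ᵥ g
  have hMb : ∀ i, ⇑(b i) ⬝ᵥ M *ᵥ g = hM.eigenvalues i * β i := by
    intro i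
    rw [dotProduct_mulVec, ← mulVec_transpose, ← conjTranspose_eq_transpose_of_trivial, hM.eq,
      hM.mulVec_eigenvectorBasis, smul_dotProduct, smul_eq_mul]
  have hterm : ∀ i, |hM.eigenvalues i * β i ^ 2| ≤ c * β i ^ 2 := by
    intro i
    have hb0 : ⇑(b i) ≠ 0 := fun h => b.orthonormal.ne_zero i (by ext j; exact congrFun h j)
    rcases heig _ _ hb0 (hM.mulVec_eigenvectorBasis i) with hconst | hsmall
    · have hβ : β i = 0 := by simp only [β, dotProduct, hconst _ i, ← mul_sum, hg, mul_zero]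
      simp [hβ]
    · rw [abs_mul, abs_pow, sq_abs]
      exact mul_le_mul_of_nonneg_right hsmall (sq_nonneg _)
  calc |g ⬝ᵥ M *ᵥ g| = |∑ i, hM.eigenvalues i * β i ^ 2| := by
        rw [b.dotProduct_eq_sum]
        simp only [hMb]
        exact congrArg _ (sum_congr rfl fun i _ => by ring)
    _ ≤ ∑ i, |hM.eigenvalues i * β i ^ 2| := abs_sum_le_sum_abs _ _
    _ ≤ ∑ i, c * β i ^ 2 := sum_le_sum fun i _ => hterm i
    _ = c * (g ⬝ᵥ g) := by rw [b.dotProduct_eq_sum g g, mul_sum]; simp only [β, sq]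

/-- `eA`, `eB` stand for the numbers of ordered edges inside the two sides of a cut with `a` and
`b` vertices, and `c` for the number of cut edges. -/
lemma mul_le_eight_mul_of_mixing {n a b d l eA eB c : ℝ} (ha : 0 < a) (hb : 0 < b)
    (hn : a + b = n) (hl : 4 * l ≤ d) (hsumA : eA + c = d * a) (hsumB : eB + c = d * b)
    (hlocA : 2 * c ≤ d * a) (hlocB : 2 * c ≤ d * b) (hmixA : |n * eA - d * a ^ 2| ≤ l * a * b)
    (hmixB : |n * eB - d * b ^ 2| ≤ l * b * a) : n * d ≤ 8 * c := by
  subst hn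
  obtain rfl : eA = d * a - c := eq_sub_of_add_eq hsumA
  obtain rfl : eB = d * b - c := eq_sub_of_add_eq hsumB
  have hA := (abs_le.mp hmixA).2
  have hB := (abs_le.mp hmixB).2
  have hcut : a * b * (d - l) ≤ (a + b) * c := by nlinarith
  have hbalA : b * (d - 2 * l) ≤ a * d := le_of_mul_le_mul_left (by nlinarith) ha
  have hbalB : a * (d - 2 * l) ≤ b * d := le_of_mul_le_mul_left (by nlinarith) hb
  have hsq : (a + b) * ((a + b) * (d - 2 * l)) ≤ (a + b) * (4 * c) := by
    nlinarith [mul_le_mul_of_nonneg_left hbalA hb.le, mul_le_mul_of_nonneg_left hbalB ha.le]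
  nlinarith [le_of_mul_le_mul_left hsq (by linarith)]

namespace SimpleGraph

variable {α : Type*}

lemma card_interedges_eq_sum (G : SimpleGraph α) (s t : Finset α) :
    #(G.interedges s t) = ∑ v ∈ s, #{w ∈ t | G.Adj v w} := by
  rw [interedges_def, card_filter, sum_product]
  exact sum_congr rfl fun v _ => (card_filter _ _).symm

lemma card_interedges_comm (G : SimpleGraph α) (s t : Finset α) :
    #(G.interedges s t) = #(G.interedges t s) :=
  have := G.symm
  Rel.card_interedges_comm s t

lemma two_mul_card_interedges_le {G : SimpleGraph α} {d : ℕ} {s t : Finset α}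
    (h : ∀ v ∈ s, 2 * #{w ∈ t | G.Adj v w} ≤ d) : 2 * #(G.interedges s t) ≤ d * #s := by
  rw [card_interedges_eq_sum, mul_sum, mul_comm, ← smul_eq_mul, ← sum_const]
  exact sum_le_sum h

variable [Fintype α] {G : SimpleGraph α}

lemma IsRegularOfDegree.adjMatrix_mulVec_one {d : ℕ} (hreg : G.IsRegularOfDegree d) :
    G.adjMatrix ℝ *ᵥ 1 = (d : ℝ) • 1 := by
  ext v
  simpa using adjMatrix_mulVec_const_apply_of_regular (a := (1 : ℝ)) hreg

variable [DecidableEq α]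

lemma card_interedges_add_card_interedges_compl_eq_sum_degree (G : SimpleGraph α)
    (s t : Finset α) : #(G.interedges s t) + #(G.interedges s tᶜ) = ∑ v ∈ s, G.degree v := by
  rw [card_interedges_eq_sum, card_interedges_eq_sum, ← sum_add_distrib]
  refine sum_congr rfl fun v _ => ?_
  rw [← card_union_of_disjoint
      (disjoint_compl_right.mono (filter_subset _ _) (filter_subset _ _)), ← filter_union,
    union_compl, ← card_neighborFinset_eq_degree, neighborFinset_eq_filter]

lemma IsRegularOfDegree.card_interedges_add_card_interedges_compl {d : ℕ}
    (hreg : G.IsRegularOfDegree d) (s t : Finset α) :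
    #(G.interedges s t) + #(G.interedges s tᶜ) = d * #s := by
  rw [card_interedges_add_card_interedges_compl_eq_sum_degree, sum_congr rfl fun v _ => hreg v,
    sum_const, smul_eq_mul, mul_comm]

lemma indicator_dotProduct_adjMatrix_mulVec_indicator (G : SimpleGraph α) (s t : Finset α) :
    (fun v => if v ∈ s then (1 : ℝ) else 0) ⬝ᵥ
        G.adjMatrix ℝ *ᵥ (fun v => if v ∈ t then 1 else 0) = #(G.interedges s t) := by
  simp [dotProduct, card_interedges_eq_sum, neighborFinset_eq_filter, filter_inter]

lemma Connected.eq_of_adjMatrix_mulVec_eq_degree_smul (hconn : G.Connected) {d : ℕ}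
    (hreg : G.IsRegularOfDegree d) {f : α → ℝ} (hf : G.adjMatrix ℝ *ᵥ f = (d : ℝ) • f)
    (i j : α) : f i = f j := by
  have hlap : G.lapMatrix ℝ *ᵥ f = 0 := by
    ext v
    simp only [lapMatrix, sub_mulVec, Pi.sub_apply, degMatrix_mulVec_apply, hreg v, hf,
      Pi.smul_apply, smul_eq_mul, sub_self, Pi.zero_apply]
  exact (lapMatrix_mulVec_eq_zero_iff_forall_reachable G).mp hlap i j (hconn.preconnected i j)

/-- The expander mixing lemma for the pair `(s, s)`. -/
theorem abs_card_mul_card_interedges_sub_le (hconn : G.Connected) {d : ℕ}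
    (hreg : G.IsRegularOfDegree d) {l : ℝ}
    (hspec : ∀ μ : ℝ, (∃ f : α → ℝ, f ≠ 0 ∧ G.adjMatrix ℝ *ᵥ f = μ • f) → μ = d ∨ |μ| ≤ l)
    (s : Finset α) :
    |(Fintype.card α : ℝ) * #(G.interedges s s) - d * #s ^ 2| ≤ l * #s * #sᶜ := by
  set n : ℝ := (Fintype.card α : ℝ)
  set a : ℝ := ((#s : ℕ) : ℝ)
  set x : α → ℝ := fun v => if v ∈ s then 1 else 0
  have heig : ∀ (μ : ℝ) (f : α → ℝ), f ≠ 0 → G.adjMatrix ℝ *ᵥ f = μ • f →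
      (∀ i j, f i = f j) ∨ |μ| ≤ l := by
    intro μ f hf0 hf
    refine (hspec μ ⟨f, hf0, hf⟩).imp (fun hμ => ?_) id
    exact hconn.eq_of_adjMatrix_mulVec_eq_degree_smul hreg (hμ ▸ hf)
  have hx1 : x ⬝ᵥ 1 = a := by simp [x, a, dotProduct]
  have h1x : 1 ⬝ᵥ x = a := by rw [dotProduct_comm, hx1]
  have h11 : (1 : α → ℝ) ⬝ᵥ 1 = n := by simp [n, dotProduct]
  have hxx : x ⬝ᵥ x = a := by simp [x, a, dotProduct]
  have h1Ax : (1 : α → ℝ) ⬝ᵥ G.adjMatrix ℝ *ᵥ x = d * a := by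
    rw [dotProduct_mulVec, ← mulVec_transpose, transpose_adjMatrix, hreg.adjMatrix_mulVec_one,
      smul_dotProduct, h1x, smul_eq_mul]
  have hxAx : x ⬝ᵥ G.adjMatrix ℝ *ᵥ x = #(G.interedges s s) :=
    G.indicator_dotProduct_adjMatrix_mulVec_indicator s s
  set g := n • x - a • 1
  have hgAg : g ⬝ᵥ G.adjMatrix ℝ *ᵥ g = n * (n * #(G.interedges s s) - d * a ^ 2) := by
    simp only [g, mulVec_sub, mulVec_smul, dotProduct_sub, sub_dotProduct, dotProduct_smul,
      smul_dotProduct, smul_eq_mul, hreg.adjMatrix_mulVec_one, hxAx, h1Ax, hx1, h11]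
    ring
  have hgg : g ⬝ᵥ g = n * (a * #sᶜ) := by
    simp only [g, dotProduct_sub, sub_dotProduct, dotProduct_smul, smul_dotProduct, smul_eq_mul,
      hxx, hx1, h1x, h11, card_compl, n, a]
    push_cast [card_le_univ]
    ring
  have key := (G.isHermitian_adjMatrix ℝ).abs_dotProduct_mulVec_le heig (g := g)
    (by simp [g, x, a, n]; ring)
  have hn : 0 ≤ n := by positivity
  rw [hgAg, hgg, abs_mul, abs_of_nonneg hn] at key
  rcases hn.eq_or_lt with hn | hn
  · have : IsEmpty α := Fintype.card_eq_zero_iff.mp (by simpa [n] using hn.symm)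
    simp [a, s.eq_empty_of_isEmpty]
  · exact le_of_mul_le_mul_left (key.trans_eq (by ring)) hn

theorem card_mul_le_eight_mul_card_interedges_compl (hconn : G.Connected) {d : ℕ}
    (hreg : G.IsRegularOfDegree d) {l : ℝ}
    (hspec : ∀ μ : ℝ, (∃ f : α → ℝ, f ≠ 0 ∧ G.adjMatrix ℝ *ᵥ f = μ • f) → μ = d ∨ |μ| ≤ l)
    (hl : 4 * l ≤ d) {s : Finset α} (hs : s.Nonempty) (hsc : sᶜ.Nonempty)
    (hloc : ∀ v ∈ s, 2 * #{w ∈ sᶜ | G.Adj v w} ≤ d)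
    (hloc' : ∀ v ∈ sᶜ, 2 * #{w ∈ s | G.Adj v w} ≤ d) :
    Fintype.card α * d ≤ 8 * #(G.interedges s sᶜ) := by
  have hmixA := abs_card_mul_card_interedges_sub_le hconn hreg hspec s
  have hmixB := abs_card_mul_card_interedges_sub_le hconn hreg hspec sᶜ
  have hsumA := hreg.card_interedges_add_card_interedges_compl s s
  have hsumB := hreg.card_interedges_add_card_interedges_compl sᶜ sᶜ
  have hlocA := two_mul_card_interedges_le hloc
  have hlocB := two_mul_card_interedges_le hloc'
  rw [compl_compl, card_interedges_comm G sᶜ s] at hsumB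
  rw [compl_compl] at hmixB
  rw [card_interedges_comm] at hlocB
  exact_mod_cast mul_le_eight_mul_of_mixing (n := Fintype.card α) (c := #(G.interedges s sᶜ))
    (by exact_mod_cast hs.card_pos) (by exact_mod_cast hsc.card_pos)
    (by exact_mod_cast card_add_card_compl s) hl (by exact_mod_cast hsumA)
    (by exact_mod_cast hsumB) (by exact_mod_cast hlocA) (by exact_mod_cast hlocB) hmixA hmixB

end SimpleGraph

lemma Finset.pair_inter_eq_singleton {V : Type*} [DecidableEq V] {A : Finset V} {u w : V}
    (hu : u ∈ A) (hw : w ∉ A) : ({u, w} : Finset V) ∩ A = {u} := by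
  rw [insert_inter_of_mem hu, singleton_inter_of_notMem hw, insert_empty]

namespace SComplex

variable {V : Type} [DecidableEq V]

/-- The coboundary `δ₀(A)` of the `F₂`-valued 0-cochain `A`. -/
def coboundary (Y : SComplex V) (A : Finset V) : Finset (Finset V) :=
  (Y.K 2).filter fun e => (e ∩ A).card = 1

lemma mem_coboundary_iff {Y : SComplex V} {A : Finset V} {e : Finset V} :
    e ∈ Y.coboundary A ↔ ∃ u ∈ A, ∃ w ∉ A, (skeletonGraph Y).Adj u w ∧ e = {u, w} := by
  constructor
  · intro he
    obtain ⟨heK, hcard⟩ := mem_filter.mp he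
    obtain ⟨hef, he2⟩ := mem_filter.mp heK
    obtain ⟨u, hu⟩ := card_eq_one.mp hcard
    obtain ⟨hue, huA⟩ := mem_inter.mp (hu ▸ mem_singleton_self u)
    obtain ⟨w, hwe, hwu⟩ := exists_mem_ne (by rw [he2]; norm_num) u
    have hwA : w ∉ A := fun hwA => hwu (mem_singleton.mp (hu ▸ mem_inter_of_mem hwe hwA))
    have hew : e = {u, w} :=
      (eq_of_subset_of_card_le (insert_subset hue (singleton_subset_iff.mpr hwe))
        (by rw [he2, card_pair hwu.symm])).symm
    exact ⟨u, huA, w, hwA, ⟨hwu.symm, hew ▸ hef⟩, hew⟩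
  · rintro ⟨u, hu, w, hw, hadj, rfl⟩
    refine mem_filter.mpr ⟨mem_filter.mpr ⟨hadj.2, card_pair hadj.1⟩, ?_⟩
    rw [pair_inter_eq_singleton hu hw, card_singleton]

variable [Fintype V]

lemma coboundary_compl (Y : SComplex V) (A : Finset V) : Y.coboundary Aᶜ = Y.coboundary A := by
  ext e
  simp only [mem_coboundary_iff, mem_compl, not_not]
  constructor <;>
  · rintro ⟨u, hu, w, hw, hadj, rfl⟩
    exact ⟨w, hw, u, hu, hadj.symm, pair_comm u w⟩

lemma coboundary_eq_image_interedges (Y : SComplex V) (A : Finset V) :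
    Y.coboundary A = ((skeletonGraph Y).interedges A Aᶜ).image fun p => {p.1, p.2} := by
  ext e
  simp only [mem_coboundary_iff, mem_image, SimpleGraph.mem_interedges_iff, mem_compl,
    Prod.exists]
  constructor
  · rintro ⟨u, hu, w, hw, hadj, rfl⟩
    exact ⟨u, w, ⟨hu, hw, hadj⟩, rfl⟩
  · rintro ⟨u, w, ⟨hu, hw, hadj⟩, rfl⟩
    exact ⟨u, hu, w, hw, hadj, rfl⟩

lemma injOn_pair_interedges_compl (Y : SComplex V) (A : Finset V) :
    Set.InjOn (fun p : V × V => ({p.1, p.2} : Finset V))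
      ((skeletonGraph Y).interedges A Aᶜ) := by
  rintro ⟨u, w⟩ huw ⟨x, y⟩ hxy h
  simp only [SimpleGraph.mem_interedges_iff, mem_compl, mem_coe] at huw hxy h
  have hux : ({u} : Finset V) = {x} := by
    rw [← pair_inter_eq_singleton huw.1 huw.2.1, h, pair_inter_eq_singleton hxy.1 hxy.2.1]
  have hwy : ({w} : Finset V) = {y} := by
    rw [← pair_inter_eq_singleton (A := Aᶜ) (mem_compl.2 huw.2.1) (by simpa using huw.1),
      pair_comm, h, pair_comm,
      pair_inter_eq_singleton (mem_compl.2 hxy.2.1) (by simpa using hxy.1)]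
  exact Prod.ext (singleton_inj.mp hux) (singleton_inj.mp hwy)

lemma card_coboundary (Y : SComplex V) (A : Finset V) :
    #(Y.coboundary A) = #((skeletonGraph Y).interedges A Aᶜ) := by
  rw [coboundary_eq_image_interedges, card_image_of_injOn (injOn_pair_interedges_compl Y A)]

lemma alphaV_coboundary_of_mem (Y : SComplex V) {A : Finset V} {v : V} (hv : v ∈ A) :
    alphaV (Y.coboundary A) v =
      ((skeletonGraph Y).interedges {v} Aᶜ).image fun p => {p.1, p.2} := by
  ext e
  simp only [alphaV, mem_filter, mem_coboundary_iff, mem_image, SimpleGraph.mem_interedges_iff,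
    mem_singleton, mem_compl, Prod.exists]
  constructor
  · rintro ⟨⟨u, hu, w, hw, hadj, rfl⟩, hve⟩
    obtain rfl : u = v := by
      rcases mem_insert.mp hve with rfl | hvw
      · rfl
      · exact absurd (mem_singleton.mp hvw ▸ hv) hw
    exact ⟨u, w, ⟨rfl, hw, hadj⟩, rfl⟩
  · rintro ⟨u, w, ⟨rfl, hw, hadj⟩, rfl⟩
    exact ⟨⟨u, hv, w, hw, hadj, rfl⟩, mem_insert_self u _⟩

lemma card_alphaV_coboundary_of_mem (Y : SComplex V) {A : Finset V} {v : V} (hv : v ∈ A) :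
    #(alphaV (Y.coboundary A) v) = #{w ∈ Aᶜ | (skeletonGraph Y).Adj v w} := by
  rw [alphaV_coboundary_of_mem Y hv, card_image_of_injOn ((injOn_pair_interedges_compl Y A).mono
    ((skeletonGraph Y).interedges_mono (singleton_subset_iff.mpr hv) subset_rfl)),
    SimpleGraph.card_interedges_eq_sum, sum_singleton]

lemma sum_card_linkVerts (Y : SComplex V) : ∑ v, #(linkVerts Y v) = 2 * #(Y.K 2) := by
  simp only [linkVerts, card_filter]
  rw [sum_comm, mul_comm, ← smul_eq_mul, ← sum_const]
  refine sum_congr rfl fun e he => ?_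
  rw [← card_filter, filter_univ_mem, (mem_filter.mp he).2]

theorem card_mul_le_eight_mul_card_coboundary {Y : SComplex V}
    (hconn : (skeletonGraph Y).Connected) {d : ℕ}
    (hreg : (skeletonGraph Y).IsRegularOfDegree d) {l : ℝ}
    (hspec : ∀ μ : ℝ, (∃ f : V → ℝ, f ≠ 0 ∧ (skeletonGraph Y).adjMatrix ℝ *ᵥ f = μ • f) →
      μ = d ∨ |μ| ≤ l)
    (hl : 4 * l ≤ d) {A : Finset V} (hne : Y.coboundary A ≠ ∅)
    (hloc : ∀ v, 2 * #(alphaV (Y.coboundary A) v) ≤ d) :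
    Fintype.card V * d ≤ 8 * #(Y.coboundary A) := by
  obtain ⟨e, he⟩ := nonempty_iff_ne_empty.mpr hne
  obtain ⟨u, hu, w, hw, -⟩ := mem_coboundary_iff.mp he
  rw [card_coboundary]
  refine SimpleGraph.card_mul_le_eight_mul_card_interedges_compl hconn hreg hspec hl ⟨u, hu⟩
    ⟨w, mem_compl.mpr hw⟩ (fun v hv => ?_) (fun v hv => ?_)
  · rw [← card_alphaV_coboundary_of_mem Y hv]
    exact hloc v
  · rw [← compl_compl A, ← card_alphaV_coboundary_of_mem Y hv, coboundary_compl]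
    exact hloc v

end SComplex

/-- For every `ε' > 0` there is `q₀ = q₀(ε')` such that for all `q ≥ q₀`
and every complex `Y` satisfying the standing hypotheses: every coboundary
`α = δ₀(A) ∈ B¹(Y,F₂)` with `|α_v| ≤ Q/2` for all `v` (local minimality) and
`|α| < |Y(1)|/(4(1+ε'))` is empty. -/
theorem small_locally_minimal_coboundary_is_zero
    (ε' : ℝ) (hε' : 0 < ε') :
    ∃ q₀ : ℕ, ∀ q : ℕ, q₀ ≤ q →
      ∀ (V : Type) [Fintype V] [DecidableEq V], ∀ (Y : SComplex V), Setup q Y →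
        ∀ α : Finset (Finset V),
          (∃ A : Finset V, α = (Y.K 2).filter fun e => (e ∩ A).card = 1) →
          (∀ v : V, ((alphaV α v).card : ℝ) ≤ 2 * ((q : ℝ) ^ 2 + q + 1) / 2) →
          (α.card : ℝ) < ((Y.K 2).card : ℝ) / (4 * (1 + ε')) →
          α = ∅ := by
  refine ⟨11, fun q hq V _ _ Y hY => ?_⟩
  rintro _ ⟨A, rfl⟩
  rw [show (Y.K 2).filter (fun e => (e ∩ A).card = 1) = Y.coboundary A from rfl]
  intro hloc hsmall
  obtain ⟨-, -, -, hconn, hdeg, hspec, hlink⟩ := hY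
  have hlinkCard : ∀ v, #(linkVerts Y v) = 2 * (q ^ 2 + q + 1) := fun v => (hlink v).2.2.2.1
  by_contra hne
  have hl : 4 * (6 * q : ℝ) ≤ (2 * (q ^ 2 + q + 1) : ℕ) := by
    push_cast
    nlinarith [(show (11 : ℝ) ≤ q by exact_mod_cast hq)]
  have hcut := SComplex.card_mul_le_eight_mul_card_coboundary hconn hdeg
    (fun μ hμ => by exact_mod_cast hspec μ hμ) hl hne
    fun v => by
      exact_mod_cast (by linarith [hloc v] : (2 : ℝ) * #(alphaV _ v) ≤ 2 * (q ^ 2 + q + 1))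
  have hK2 := SComplex.sum_card_linkVerts Y
  simp only [hlinkCard, sum_const, card_univ, smul_eq_mul] at hK2
  have hK : (#(Y.K 2) : ℝ) ≤ 4 * #(Y.coboundary A) := by exact_mod_cast (by omega)
  rw [lt_div_iff₀ (by positivity)] at hsmall
  nlinarith [mul_nonneg hε'.le (Nat.cast_nonneg (α := ℝ) #(Y.coboundary A))]
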